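/- Let γ > 0 and fix x_D ∈ ℝ. For every x* ∈ ℝ, set d = |x_D − x*|. Then the second derivative of the function y ↦ f_γ(x_D − y) at the point x* equals (5/(3γ²))·(5d²/γ² − 1 − √5·d/γ)·exp(−√5·d/γ). -/

import Mathlib

/-!
With `c = √5 / γ`, the correlation is `t ↦ φ (c |t|)` for the profile
`φ u = (1 + u + u² / 3) e⁻ᵘ`. Since `φ' 0 = 0`, the even function `φ (c |·|)` is differentiable
at the origin too, with derivative the odd function `sign t · c φ' (c |t|)`; as this vanishes
at `0`, it is differentiable again, with derivative `c² φ'' (c |t|)`. The reflection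
`y ↦ x_D − y` does not change second derivatives.
-/

/-- The Matérn-5/2 correlation function with range parameter `γ`. -/
noncomputable def matern52 (γ : ℝ) (t : ℝ) : ℝ :=
  (1 + Real.sqrt 5 * |t| / γ + 5 * t ^ 2 / (3 * γ ^ 2)) * Real.exp (-(Real.sqrt 5 * |t| / γ))

open Real Asymptotics

theorem HasDerivAt.comp_abs {g : ℝ → ℝ} {g' x : ℝ} (hg : HasDerivAt g g' |x|)
    (hg' : x = 0 → g' = 0) : HasDerivAt (fun t => g |t|) (SignType.sign x * g') x := by
  rcases eq_or_ne x 0 with rfl | hx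
  · rw [abs_zero, hg' rfl, hasDerivAt_iff_isLittleO_nhds_zero] at hg
    rw [hg' rfl, mul_zero, hasDerivAt_iff_isLittleO_nhds_zero]
    have := hg.comp_tendsto (continuous_abs.tendsto' 0 0 abs_zero)
    exact isLittleO_abs_right.mp (by simpa [Function.comp_def] using this)
  · rw [mul_comm]
    exact hg.comp x (hasDerivAt_abs hx)

theorem HasDerivAt.sign_mul_comp_abs {h : ℝ → ℝ} {h' x : ℝ} (hh : HasDerivAt h h' |x|)
    (h0 : h 0 = 0) : HasDerivAt (fun t => SignType.sign t * h |t|) h' x := by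
  rcases eq_or_ne x 0 with rfl | hx
  · rw [abs_zero, hasDerivAt_iff_isLittleO_nhds_zero] at hh
    rw [hasDerivAt_iff_isLittleO_nhds_zero]
    have hsmall : (fun t : ℝ => h |t| - |t| * h') =o[nhds 0] id := by
      have := hh.comp_tendsto (continuous_abs.tendsto' 0 0 abs_zero)
      exact isLittleO_abs_right.mp (by simpa [Function.comp_def, h0] using this)
    have hsign : (fun t : ℝ => (SignType.sign t : ℝ)) =O[nhds 0] (fun _ => (1 : ℝ)) := by
      refine isBigO_of_le _ fun t => ?_
      rcases lt_trichotomy t 0 with ht | rfl | ht <;> simp [*]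
    refine (hsign.mul_isLittleO hsmall).congr (fun t => ?_) (fun t => ?_)
    · simp [h0, mul_sub, ← mul_assoc]
    · simp
  · have hsq : (SignType.sign x : ℝ) * SignType.sign x = 1 := by
      rcases hx.lt_or_gt with hx | hx <;> simp [hx]
    refine (((hh.comp x (hasDerivAt_abs hx)).const_mul (SignType.sign x : ℝ)).congr_deriv
      ?_).congr_of_eventuallyEq ?_
    · rw [mul_left_comm, hsq, mul_one]
    · filter_upwards [continuousAt_sign_of_ne_zero hx
        ((isOpen_discrete {SignType.sign x}).mem_nhds rfl)] with t ht
      simp_all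

theorem deriv_deriv_comp_const_sub {𝕜 F : Type*} [NontriviallyNormedField 𝕜]
    [NormedAddCommGroup F] [NormedSpace 𝕜 F] (f : 𝕜 → F) (c x : 𝕜) :
    deriv (deriv fun y => f (c - y)) x = deriv (deriv f) (c - x) := by
  have hderiv : deriv (fun y => f (c - y)) = fun y => -deriv f (c - y) :=
    funext fun y => deriv_comp_const_sub ..
  rw [hderiv, deriv.fun_neg, deriv_comp_const_sub, neg_neg]

noncomputable def matern52Profile (u : ℝ) : ℝ := (1 + u + u ^ 2 / 3) * exp (-u)

theorem matern52_eq_matern52Profile (γ t : ℝ) :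
    matern52 γ t = matern52Profile (√5 / γ * |t|) := by
  have h5 : √5 ^ 2 = 5 := sq_sqrt (by norm_num)
  simp only [matern52, matern52Profile, mul_pow, div_pow, h5, sq_abs]
  ring_nf

theorem hasDerivAt_matern52Profile (u : ℝ) :
    HasDerivAt matern52Profile (-(u * (1 + u) / 3 * exp (-u))) u := by
  have hpoly : HasDerivAt (fun u : ℝ => 1 + u + u ^ 2 / 3) (1 + 2 * u / 3) u :=
    (((hasDerivAt_id' u).const_add 1).fun_add ((hasDerivAt_pow 2 u).div_const 3)).congr_deriv
      (by ring)
  exact (hpoly.fun_mul (hasDerivAt_neg' u).exp).congr_deriv (by ring)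

theorem hasDerivAt_matern52Profile_comp_mul_abs (c t : ℝ) :
    HasDerivAt (fun s => matern52Profile (c * |s|))
      (-(c ^ 2 / 3) * t * (1 + c * |t|) * exp (-(c * |t|))) t := by
  have hscaled : HasDerivAt (fun u => matern52Profile (c * u))
      (c * -(c * |t| * (1 + c * |t|) / 3 * exp (-(c * |t|)))) |t| :=
    ((hasDerivAt_matern52Profile (c * |t|)).comp |t| ((hasDerivAt_id' _).const_mul c)).congr_deriv
      (by ring)
  convert hscaled.comp_abs (fun ht => by simp [ht]) using 1
  linear_combination (c ^ 2 / 3 * (1 + c * |t|) * exp (-(c * |t|))) * sign_mul_abs t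

theorem hasDerivAt_deriv_matern52Profile_comp_mul_abs (c t : ℝ) :
    HasDerivAt (deriv fun s => matern52Profile (c * |s|))
      (c ^ 2 / 3 * (c ^ 2 * t ^ 2 - 1 - c * |t|) * exp (-(c * |t|))) t := by
  have hpoly : HasDerivAt (fun u : ℝ => -(c ^ 2 / 3) * u * (1 + c * u))
      (-(c ^ 2 / 3) * (1 + 2 * c * |t|)) |t| :=
    (((hasDerivAt_id' _).const_mul _).fun_mul
      (((hasDerivAt_id' _).const_mul c).const_add 1)).congr_deriv (by ring)
  have hodd := (hpoly.fun_mul ((hasDerivAt_id' _).const_mul c).fun_neg.exp).congr_deriv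
    (show _ = c ^ 2 / 3 * (c ^ 2 * t ^ 2 - 1 - c * |t|) * exp (-(c * |t|)) by
      rw [← sq_abs t]; ring)
  convert hodd.sign_mul_comp_abs (by simp) using 1
  funext s
  rw [(hasDerivAt_matern52Profile_comp_mul_abs c s).deriv]
  linear_combination (c ^ 2 / 3 * (1 + c * |s|) * exp (-(c * |s|))) * sign_mul_abs s

theorem deriv_deriv_matern52 (γ t : ℝ) :
    deriv (deriv (matern52 γ)) t =
      (√5 / γ) ^ 2 / 3 * ((√5 / γ) ^ 2 * t ^ 2 - 1 - √5 / γ * |t|) * exp (-(√5 / γ * |t|)) := by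
  rw [funext (matern52_eq_matern52Profile γ),
    (hasDerivAt_deriv_matern52Profile_comp_mul_abs _ t).deriv]

theorem matern52_cross_second_deriv_general (γ : ℝ) (xD xstar : ℝ)
    (d : ℝ) (hd : d = |xD - xstar|) :
    deriv (deriv (fun y => matern52 γ (xD - y))) xstar =
      (5 / (3 * γ ^ 2)) * (5 * d ^ 2 / γ ^ 2 - 1 - Real.sqrt 5 * d / γ)
        * Real.exp (-(Real.sqrt 5 * d / γ)) := by
  rw [deriv_deriv_comp_const_sub, deriv_deriv_matern52, ← sq_abs (xD - xstar), ← hd,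
    div_pow, sq_sqrt (by norm_num : (0 : ℝ) ≤ 5)]
  ring_nf

/-- With `d = |x_D − x*|`, the second derivative of `y ↦ f_γ (x_D − y)` at `x*` equals
`(5/(3γ²)) (5d²/γ² − 1 − √5 d/γ) exp(−√5 d/γ)`. -/
theorem matern52_cross_second_deriv (γ : ℝ) (hγ : 0 < γ) (xD xstar : ℝ)
    (d : ℝ) (hd : d = |xD - xstar|) :
    deriv (deriv (fun y => matern52 γ (xD - y))) xstar =
      (5 / (3 * γ ^ 2)) * (5 * d ^ 2 / γ ^ 2 - 1 - Real.sqrt 5 * d / γ)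
        * Real.exp (-(Real.sqrt 5 * d / γ)) :=
  matern52_cross_second_deriv_general γ xD xstar d hd
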